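/- For every formula A, minimal logic proves N₂(A) ↔ FD(G(A)): the translation N₂(A) = G(A)[F/⊥] factors, up to ML-provable equivalence, as the Friedman–Dragalin translation composed with the Gödel–Gentzen translation. -/

import Mathlib

/-- Formulas of pure first-order predicate logic (de Bruijn indices;
terms are just variables, atoms are predicate symbols applied to variables). -/
inductive Formula : Type
  | bot : Formula
  | atom : ℕ → List ℕ → Formula
  | and : Formula → Formula → Formula
  | or : Formula → Formula → Formula
  | imp : Formula → Formula → Formula
  | all : Formula → Formula
  | ex : Formula → Formula

namespace Formula

def neg (A : Formula) : Formula := A.imp bot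
def iff (A B : Formula) : Formula := (A.imp B).and (B.imp A)

/-- Lift (shift by one) the free variables ≥ c. -/
def liftVar (c v : ℕ) : ℕ := if v < c then v else v + 1

def lift : ℕ → Formula → Formula
  | _, bot => bot
  | c, atom p ts => atom p (ts.map (liftVar c))
  | c, and A B => and (lift c A) (lift c B)
  | c, or A B => or (lift c A) (lift c B)
  | c, imp A B => imp (lift c A) (lift c B)
  | c, all A => all (lift (c+1) A)
  | c, ex A => ex (lift (c+1) A)

/-- Substitute the term (variable) `t` for the bound variable at depth `c`. -/
def substVar (c t v : ℕ) : ℕ := if v < c then v else if v = c then t + c else v - 1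

def subst : ℕ → ℕ → Formula → Formula
  | _, _, bot => bot
  | c, t, atom p ts => atom p (ts.map (substVar c t))
  | c, t, and A B => and (subst c t A) (subst c t B)
  | c, t, or A B => or (subst c t A) (subst c t B)
  | c, t, imp A B => imp (subst c t A) (subst c t B)
  | c, t, all A => all (subst (c+1) t A)
  | c, t, ex A => ex (subst (c+1) t A)

end Formula

/-- The three flavours of logic: minimal, intuitionistic, classical. -/
inductive Flavour : Type
  | min | int | cl
  deriving DecidableEq

/-- Natural deduction. `Prf f Γ A`: A is derivable from hypotheses Γ in
minimal/intuitionistic/classical first-order logic according to `f`. -/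
inductive Prf : Flavour → Set Formula → Formula → Prop
  | hyp {f : Flavour} {Γ : Set Formula} {A : Formula} : A ∈ Γ → Prf f Γ A
  | andI {f : Flavour} {Γ : Set Formula} {A B : Formula} : Prf f Γ A → Prf f Γ B → Prf f Γ (A.and B)
  | andE1 {f : Flavour} {Γ : Set Formula} {A B : Formula} : Prf f Γ (A.and B) → Prf f Γ A
  | andE2 {f : Flavour} {Γ : Set Formula} {A B : Formula} : Prf f Γ (A.and B) → Prf f Γ B
  | orI1 {f : Flavour} {Γ : Set Formula} {A B : Formula} : Prf f Γ A → Prf f Γ (A.or B)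
  | orI2 {f : Flavour} {Γ : Set Formula} {A B : Formula} : Prf f Γ B → Prf f Γ (A.or B)
  | orE {f : Flavour} {Γ : Set Formula} {A B C : Formula} : Prf f Γ (A.or B) → Prf f (insert A Γ) C →
      Prf f (insert B Γ) C → Prf f Γ C
  | impI {f : Flavour} {Γ : Set Formula} {A B : Formula} : Prf f (insert A Γ) B → Prf f Γ (A.imp B)
  | impE {f : Flavour} {Γ : Set Formula} {A B : Formula} : Prf f Γ (A.imp B) → Prf f Γ A → Prf f Γ B
  | allI {f : Flavour} {Γ : Set Formula} {A : Formula} : Prf f (Formula.lift 0 '' Γ) A → Prf f Γ (Formula.all A)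
  | allE {f : Flavour} {Γ : Set Formula} {A : Formula} (t : ℕ) : Prf f Γ (Formula.all A) → Prf f Γ (A.subst 0 t)
  | exI {f : Flavour} {Γ : Set Formula} {A : Formula} (t : ℕ) : Prf f Γ (A.subst 0 t) → Prf f Γ (Formula.ex A)
  | exE {f : Flavour} {Γ : Set Formula} {A B : Formula} : Prf f Γ (Formula.ex A) →
      Prf f (insert A (Formula.lift 0 '' Γ)) (B.lift 0) → Prf f Γ B
  | exfalso {f : Flavour} {Γ : Set Formula} {A : Formula} : f ≠ Flavour.min → Prf f Γ Formula.bot → Prf f Γ A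
  | dne {f : Flavour} {Γ : Set Formula} {A : Formula} : f = Flavour.cl → Prf f Γ A.neg.neg → Prf f Γ A

/-- The Gödel–Gentzen negative translation. -/
def G : Formula → Formula
  | .bot => .bot
  | .atom p ts => (Formula.atom p ts).neg.neg
  | .and A B => (G A).and (G B)
  | .or A B => ((G A).neg.and (G B).neg).neg
  | .imp A B => (G A).imp (G B)
  | .all A => .all (G A)
  | .ex A => (Formula.all (G A).neg).neg

/-- The negative fragment: ⊥, negated atoms, closed under ∧, →, ∀. -/
inductive NF : Formula → Prop
  | bot : NF Formula.bot
  | negAtom (p : ℕ) (ts : List ℕ) : NF (Formula.atom p ts).neg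
  | and {A B} : NF A → NF B → NF (A.and B)
  | imp {A B} : NF A → NF B → NF (A.imp B)
  | all {A} : NF A → NF (Formula.all A)

/-- Iterated lifting (adjusting a formula to sit under `n` binders). -/
def liftN : ℕ → Formula → Formula
  | 0, A => A
  | n+1, A => Formula.lift 0 (liftN n A)

/-- Substitute the formula `F` for every occurrence of ⊥ (written A[F/⊥]). -/
def substBot (F : Formula) : ℕ → Formula → Formula
  | d, .bot => liftN d F
  | _, .atom p ts => .atom p ts
  | d, .and A B => .and (substBot F d A) (substBot F d B)
  | d, .or A B => .or (substBot F d A) (substBot F d B)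
  | d, .imp A B => .imp (substBot F d A) (substBot F d B)
  | d, .all A => .all (substBot F (d+1) A)
  | d, .ex A => .ex (substBot F (d+1) A)

/-- The translation N₂(A) = G(A)[F/⊥]. -/
def N2 (F A : Formula) : Formula := substBot F 0 (G A)

/-- The Friedman–Dragalin translation: replace ⊥ by F and every atomic
subformula P ≢ ⊥ by P ∨ F. -/
def FD (F : Formula) : ℕ → Formula → Formula
  | d, .bot => liftN d F
  | d, .atom p ts => (Formula.atom p ts).or (liftN d F)
  | d, .and A B => .and (FD F d A) (FD F d B)
  | d, .or A B => .or (FD F d A) (FD F d B)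
  | d, .imp A B => .imp (FD F d A) (FD F d B)
  | d, .all A => .all (FD F (d+1) A)
  | d, .ex A => .ex (FD F (d+1) A)

/-! The Gödel–Gentzen translation lands in the negative fragment, where atoms occur only
negated. On that fragment `substBot F` and `FD F` agree except at a negated atom, which the
first sends to `P → F` and the second to `P ∨ F → F`; these are equivalent in minimal logic,
and both translations commute with `∧`, `→`, `∀`, so congruence of provable equivalence
finishes. -/

namespace Formula

theorem substVar_liftVar_succ (c v : ℕ) : substVar c 0 (liftVar (c + 1) v) = v := by
  simp only [liftVar, substVar]
  split_ifs <;> omega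

theorem subst_lift_succ (A : Formula) (c : ℕ) : (A.lift (c + 1)).subst c 0 = A := by
  induction A generalizing c <;>
    simp_all [lift, subst, Function.comp_def, substVar_liftVar_succ]

end Formula

namespace Prf

variable {f : Flavour}

theorem weaken {Γ Δ : Set Formula} {A : Formula} (h : Prf f Γ A) (sub : Γ ⊆ Δ) :
    Prf f Δ A := by
  induction h generalizing Δ with
  | hyp h => exact .hyp (sub h)
  | andI _ _ ih1 ih2 => exact .andI (ih1 sub) (ih2 sub)
  | andE1 _ ih => exact .andE1 (ih sub)
  | andE2 _ ih => exact .andE2 (ih sub)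
  | orI1 _ ih => exact .orI1 (ih sub)
  | orI2 _ ih => exact .orI2 (ih sub)
  | orE _ _ _ ih ih1 ih2 =>
      exact .orE (ih sub) (ih1 (Set.insert_subset_insert sub)) (ih2 (Set.insert_subset_insert sub))
  | impI _ ih => exact .impI (ih (Set.insert_subset_insert sub))
  | impE _ _ ih1 ih2 => exact .impE (ih1 sub) (ih2 sub)
  | allI _ ih => exact .allI (ih (Set.image_mono sub))
  | allE t _ ih => exact .allE t (ih sub)
  | exI t _ ih => exact .exI t (ih sub)
  | exE _ _ ih1 ih2 =>
      exact .exE (ih1 sub) (ih2 (Set.insert_subset_insert (Set.image_mono sub)))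
  | exfalso hf _ ih => exact .exfalso hf (ih sub)
  | dne hf _ ih => exact .dne hf (ih sub)

theorem hyp0 {Γ : Set Formula} {A : Formula} : Prf f (insert A Γ) A :=
  .hyp (Set.mem_insert _ _)

theorem hyp1 {Γ : Set Formula} {A B : Formula} : Prf f (insert B (insert A Γ)) A :=
  .hyp (Set.mem_insert_of_mem _ (Set.mem_insert _ _))

theorem iff_refl {Γ : Set Formula} (A : Formula) : Prf f Γ (A.iff A) :=
  .andI (.impI hyp0) (.impI hyp0)

theorem iff_symm {Γ : Set Formula} {A B : Formula} (h : Prf f Γ (A.iff B)) : Prf f Γ (B.iff A) :=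
  .andI h.andE2 h.andE1

theorem iff_mp {A B : Formula} (h : Prf f ∅ (A.iff B)) {Γ : Set Formula} (hA : Prf f Γ A) :
    Prf f Γ B :=
  .impE (h.andE1.weaken (Set.empty_subset _)) hA

theorem iff_mpr {A B : Formula} (h : Prf f ∅ (A.iff B)) {Γ : Set Formula} (hB : Prf f Γ B) :
    Prf f Γ A :=
  h.iff_symm.iff_mp hB

theorem imp_iff_or_imp_self (P X : Formula) : Prf f ∅ ((P.imp X).iff ((P.or X).imp X)) :=
  .andI (.impI (.impI (.orE hyp0 (.impE (.hyp (by simp)) hyp0) hyp0)))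
    (.impI (.impI (.impE hyp1 (.orI1 hyp0))))

theorem and_congr {A A' B B' : Formula} (hA : Prf f ∅ (A.iff A')) (hB : Prf f ∅ (B.iff B')) :
    Prf f ∅ ((A.and B).iff (A'.and B')) :=
  .andI (.impI (.andI (hA.iff_mp (.andE1 hyp0)) (hB.iff_mp (.andE2 hyp0))))
    (.impI (.andI (hA.iff_mpr (.andE1 hyp0)) (hB.iff_mpr (.andE2 hyp0))))

theorem imp_congr {A A' B B' : Formula} (hA : Prf f ∅ (A.iff A')) (hB : Prf f ∅ (B.iff B')) :
    Prf f ∅ ((A.imp B).iff (A'.imp B')) :=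
  .andI (.impI (.impI (hB.iff_mp (.impE hyp1 (hA.iff_mpr hyp0)))))
    (.impI (.impI (hB.iff_mpr (.impE hyp1 (hA.iff_mp hyp0)))))

theorem all_imp_all {A B : Formula} (h : Prf f ∅ (A.iff B)) :
    Prf f ∅ ((Formula.all A).imp (Formula.all B)) := by
  refine .impI (.allI (h.iff_mp ?_))
  have hall : Prf f (Formula.lift 0 '' insert (Formula.all A) ∅) (Formula.all (A.lift 1)) :=
    .hyp ⟨Formula.all A, Set.mem_insert _ _, rfl⟩
  simpa only [Formula.subst_lift_succ] using hall.allE 0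

theorem all_congr {A B : Formula} (h : Prf f ∅ (A.iff B)) :
    Prf f ∅ ((Formula.all A).iff (Formula.all B)) :=
  .andI (all_imp_all h) (all_imp_all h.iff_symm)

end Prf

theorem NF_G (A : Formula) : NF (G A) := by
  induction A with
  | bot => exact .bot
  | atom p ts => exact .imp (.negAtom p ts) .bot
  | and _ _ ihA ihB => exact .and ihA ihB
  | or _ _ ihA ihB => exact .imp (.and (.imp ihA .bot) (.imp ihB .bot)) .bot
  | imp _ _ ihA ihB => exact .imp ihA ihB
  | all _ ihA => exact .all ihA
  | ex _ ihA => exact .imp (.all (.imp ihA .bot)) .bot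

theorem NF.substBot_iff_FD {f : Flavour} (F : Formula) {B : Formula} (hB : NF B) (d : ℕ) :
    Prf f ∅ ((substBot F d B).iff (FD F d B)) := by
  induction hB generalizing d with
  | bot => exact Prf.iff_refl _
  | negAtom p ts => exact Prf.imp_iff_or_imp_self (.atom p ts) (liftN d F)
  | and _ _ ihA ihB => exact (ihA d).and_congr (ihB d)
  | imp _ _ ihA ihB => exact (ihA d).imp_congr (ihB d)
  | all _ ih => exact (ih (d + 1)).all_congr

/-- Factorisation N₂ = FD ∘ G up to provable equivalence in minimal logic. -/
theorem N2_eq_FD_G (F A : Formula) :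
    Prf Flavour.min ∅ ((N2 F A).iff (FD F 0 (G A))) :=
  (NF_G A).substBot_iff_FD F 0
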